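/- arXiv:1501.03351 — 2 statements merged into one kernel-verified Lean document; each statement's English description precedes it below -/
import Mathlib

section
/- For every k ≥ 1: Σ_{i=1}^{∞} p_k^S(i−1, ∞) = (1/2) Σ_{i=1}^{4k} p_k^S(i−1, 4k−i); in particular the left-hand series has only finitely many nonzero terms, since p_k^S(i−1, ∞) = 0 for i > 2k. -/
open MeasureTheory ENNReal
open scoped Classical

/-- A configuration: a coloring of `ℤ` with the two colors coded by `Bool`. -/
abbrev Config := ℤ → Bool

/-- A site `x` is unstable in `η` iff it lies in a monochromatic chain of length (at least) 3,
i.e. there is `y ∈ {x-2, x-1, x}` with `η y = η (y+1) = η (y+2)`. Spelled out explicitly. -/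
def Unstable (η : Config) (x : ℤ) : Prop :=
  (η (x - 2) = η (x - 1) ∧ η (x - 1) = η x) ∨
  (η (x - 1) = η x ∧ η x = η (x + 1)) ∨
  (η x = η (x + 1) ∧ η (x + 1) = η (x + 2))

instance (η : Config) (x : ℤ) : Decidable (Unstable η x) := by
  unfold Unstable; infer_instance

/-- One step of the dynamics: stable sites keep their color, unstable ones are recolored
using the fresh colors `c`. -/
def update (η : Config) (c : ℤ → Bool) : Config :=
  fun x => if Unstable η x then c x else η x

/-- `evolve ω η k = R^k(η)`: the configuration after `k` steps, where the simultaneous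
recoloring at step `j` uses the fresh colors `ω j`. -/
def evolve (ω : ℕ → ℤ → Bool) (η : Config) : ℕ → Config
  | 0 => η
  | k + 1 => update (evolve ω η k) (ω k)

/-- `μ` makes the coordinates of the coin field i.i.d. uniform on the two colors:
every finite cylinder event has probability `(1/2)^(number of coordinates)`. -/
def IIDCoins (μ : Measure (ℕ → ℤ → Bool)) : Prop :=
  ∀ (S : Finset (ℕ × ℤ)) (f : ℕ × ℤ → Bool),
    μ {ω | ∀ p ∈ S, ω p.1 p.2 = f p} = (1 / 2 : ℝ≥0∞) ^ S.card

/-- The number of unstable sites of a configuration. -/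
noncomputable def numUnstable (η : Config) : ℕ∞ := {x : ℤ | Unstable η x}.encard

/-- `p_k^I`: sup over configurations `η` with site `0` unstable of `P(σ_{R^k(η)}(0) = 0)`. -/
noncomputable def pI (μ : Measure (ℕ → ℤ → Bool)) (k : ℕ) : ℝ≥0∞ :=
  ⨆ (η : Config) (_ : Unstable η 0), μ {ω | Unstable (evolve ω η k) 0}

/-- `p_k^{III}`: sup over configurations `η` with sites `-1, 0, 1` all unstable of
`P(σ_{R^k(η)}(0) = 0)`. -/
noncomputable def pIII (μ : Measure (ℕ → ℤ → Bool)) (k : ℕ) : ℝ≥0∞ :=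
  ⨆ (η : Config) (_ : Unstable η (-1) ∧ Unstable η 0 ∧ Unstable η 1),
    μ {ω | Unstable (evolve ω η k) 0}

/-- The conditioning event of `p_k^S(n,m)` (at site `0`): all sites `i` with `-n ≤ i ≤ m`
are stable, and the boundary sites `-n-1` (if `n` is finite) and `m+1` (if `m` is finite)
are unstable.  The inequality `-n ≤ i ≤ m` in `ℕ∞` is coded using `Int.toNat`. -/
def SWindow (η : Config) (n m : ℕ∞) : Prop :=
  (∀ i : ℤ, (((-i).toNat : ℕ∞) ≤ n) → ((i.toNat : ℕ∞) ≤ m) → ¬ Unstable η i) ∧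
  (∀ nn : ℕ, n = (nn : ℕ∞) → Unstable η (-(nn : ℤ) - 1)) ∧
  (∀ mm : ℕ, m = (mm : ℕ∞) → Unstable η ((mm : ℤ) + 1))

/-- `p_k^S(n,m)` for `n, m ∈ ℕ ∪ {∞}`: sup over configurations `η` satisfying the stable-window
condition of `P(σ_{R^k(η)}(0) = 0)`. -/
noncomputable def pS (μ : Measure (ℕ → ℤ → Bool)) (k : ℕ) (n m : ℕ∞) : ℝ≥0∞ :=
  ⨆ (η : Config) (_ : SWindow η n m), μ {ω | Unstable (evolve ω η k) 0}

/-!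
Stability spreads at most two sites per step. So if every site of `[-n, ∞)` is stable and
`n ≥ 2k`, site `0` is still stable at time `k`, i.e. `p_k^S(n, ∞) = 0`. For the same reason the
state of site `0` up to time `k` only depends on the configuration left of `m` once `m ≥ 2k` and
`m - 1, m` are stable; continuing a configuration beyond `m` alternately (no new instability) or
by a constant block of the opposite color (making `m + 1` unstable) then gives
`p_k^S(n, m) = p_k^S(n, ∞)`. The reflection `x ↦ -x` preserves the law of the coins, so
`p_k^S(n, m) = p_k^S(m, n)`. Splitting the finite sum at `i = 2k` and reflecting its upper half
yields twice the (finite) series.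
-/

lemma unstable_iff_exists {η : Config} {x : ℤ} :
    Unstable η x ↔ ∃ y, y ≤ x ∧ x ≤ y + 2 ∧ η y = η (y + 1) ∧ η (y + 1) = η (y + 2) := by
  constructor
  · rintro (h | h | h)
    · exact ⟨x - 2, by omega, by omega, by simpa [show x - 2 + 1 = x - 1 by ring] using h⟩
    · exact ⟨x - 1, by omega, by omega, by simpa [show x - 1 + 2 = x + 1 by ring] using h⟩
    · exact ⟨x, le_rfl, by omega, h⟩
  · rintro ⟨y, hyx, hxy, h⟩
    obtain rfl | rfl | rfl : x = y + 2 ∨ x = y + 1 ∨ x = y := by omega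
    · exact Or.inl (by simpa [show y + 2 - 1 = y + 1 by ring] using h)
    · exact Or.inr (Or.inl (by simpa [show y + 1 + 1 = y + 2 by ring] using h))
    · exact Or.inr (Or.inr h)

lemma unstable_congr {ξ ξ' : Config} {x : ℤ} (h : ∀ y, x - 2 ≤ y → y ≤ x + 2 → ξ y = ξ' y) :
    Unstable ξ x ↔ Unstable ξ' x := by
  unfold Unstable
  rw [h (x - 2) (by omega) (by omega), h (x - 1) (by omega) (by omega), h x (by omega) (by omega),
    h (x + 1) (by omega) (by omega), h (x + 2) (by omega) (by omega)]

lemma update_of_not_unstable {η : Config} {x : ℤ} (c : ℤ → Bool) (hx : ¬Unstable η x) :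
    update η c x = η x :=
  if_neg hx

lemma update_eq_of_eqOn_Iic {ξ ξ' : Config} {M : ℤ} (c : ℤ → Bool) (h : ∀ x ≤ M, ξ x = ξ' x) :
    ∀ x ≤ M - 2, update ξ c x = update ξ' c x := by
  intro x hx
  simp only [update, unstable_congr (ξ' := ξ') (x := x) fun y _ _ => h y (by omega), h x (by omega)]

/-- The stable sites `M - 1, M` keep their colors in the first step, so the region of agreement
only starts to recede by two sites per step after it. -/
lemma evolve_succ_eq_of_eqOn_Iic {η η' : Config} {M : ℤ} (ω : ℕ → ℤ → Bool)
    (h : ∀ x ≤ M, η x = η' x)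
    (hstab : ∀ x, M - 1 ≤ x → x ≤ M → ¬Unstable η x ∧ ¬Unstable η' x) (t : ℕ) :
    ∀ x ≤ M - 2 * t, evolve ω η (t + 1) x = evolve ω η' (t + 1) x := by
  induction t with
  | zero =>
    intro x hx
    show update η (ω 0) x = update η' (ω 0) x
    by_cases hx' : x ≤ M - 2
    · exact update_eq_of_eqOn_Iic _ h x hx'
    · obtain ⟨hs, hs'⟩ := hstab x (by omega) (by simpa using hx)
      rw [update_of_not_unstable _ hs, update_of_not_unstable _ hs', h x (by simpa using hx)]
  | succ t ih =>
    exact fun x hx => update_eq_of_eqOn_Iic (ω (t + 1)) ih x (by push_cast at hx; omega)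

lemma not_unstable_evolve_of_forall_ge {η : Config} {a : ℤ} (ω : ℕ → ℤ → Bool)
    (h : ∀ x, a ≤ x → ¬Unstable η x) (t : ℕ) :
    ∀ x, a + 2 * t ≤ x → ¬Unstable (evolve ω η t) x := by
  induction t with
  | zero => simpa [evolve] using h
  | succ t ih =>
    intro x hx
    have hfix : ∀ y, a + 2 * t ≤ y → evolve ω η (t + 1) y = evolve ω η t y :=
      fun y hy => update_of_not_unstable _ (ih y hy)
    rw [unstable_congr fun y _ _ => hfix y (by push_cast at hx; omega)]
    exact ih x (by push_cast at hx; omega)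

def reflect (η : Config) : Config := fun x => η (-x)

def coinReflect (ω : ℕ → ℤ → Bool) : ℕ → ℤ → Bool := fun j => reflect (ω j)

lemma unstable_reflect (η : Config) (x : ℤ) : Unstable (reflect η) x ↔ Unstable η (-x) := by
  unfold Unstable reflect
  rw [show -(x - 2) = -x + 2 by ring, show -(x - 1) = -x + 1 by ring,
    show -(x + 1) = -x - 1 by ring, show -(x + 2) = -x - 2 by ring]
  tauto

lemma update_reflect (ξ : Config) (c : ℤ → Bool) :
    update (reflect ξ) (reflect c) = reflect (update ξ c) := by
  funext x
  simp only [update, unstable_reflect]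
  rfl

lemma evolve_coinReflect_reflect (ω : ℕ → ℤ → Bool) (η : Config) (t : ℕ) :
    evolve (coinReflect ω) (reflect η) t = reflect (evolve ω η t) := by
  induction t with
  | zero => rfl
  | succ t ih => exact (congrArg (update · _) ih).trans (update_reflect _ _)

lemma swindow_reflect {η : Config} {n m : ℕ∞} (h : SWindow η n m) : SWindow (reflect η) m n := by
  obtain ⟨hwin, hleft, hright⟩ := h
  refine ⟨fun i hi₁ hi₂ => ?_, fun nn hnn => ?_, fun mm hmm => ?_⟩
  · rw [unstable_reflect]
    exact hwin (-i) (by rwa [neg_neg]) hi₁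
  · rw [unstable_reflect, show -(-(nn : ℤ) - 1) = nn + 1 by ring]
    exact hright nn hnn
  · rw [unstable_reflect, show -((mm : ℤ) + 1) = -mm - 1 by ring]
    exact hleft mm hmm

lemma measurable_coin (j : ℕ) (x : ℤ) : Measurable fun ω : ℕ → ℤ → Bool => ω j x :=
  (measurable_pi_apply x).comp (measurable_pi_apply j)

lemma measurableSet_unstable {α : Type*} [MeasurableSpace α] {g : α → Config}
    (hg : ∀ y, Measurable fun a => g a y) (x : ℤ) : MeasurableSet {a | Unstable (g a) x} := by
  have heq : ∀ y z : ℤ, MeasurableSet {a | g a y = g a z} :=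
    fun y z => measurableSet_eq_fun (hg y) (hg z)
  exact ((heq _ _).inter (heq _ _)).union (((heq _ _).inter (heq _ _)).union
    ((heq _ _).inter (heq _ _)))

lemma measurable_evolve_apply (η : Config) (k : ℕ) (x : ℤ) :
    Measurable fun ω : ℕ → ℤ → Bool => evolve ω η k x := by
  induction k generalizing x with
  | zero => exact measurable_const
  | succ k ih =>
    exact Measurable.ite (measurableSet_unstable ih x) (measurable_coin k x) (ih x)

lemma measurable_coinReflect : Measurable coinReflect :=
  measurable_pi_lambda _ fun j => measurable_pi_lambda _ fun x => measurable_coin j (-x)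

def cylinders : Set (Set (ℕ → ℤ → Bool)) :=
  {s | ∃ (S : Finset (ℕ × ℤ)) (f : ℕ × ℤ → Bool), s = {ω | ∀ p ∈ S, ω p.1 p.2 = f p}}

lemma measurableSet_cylinder (S : Finset (ℕ × ℤ)) (f : ℕ × ℤ → Bool) :
    MeasurableSet {ω : ℕ → ℤ → Bool | ∀ p ∈ S, ω p.1 p.2 = f p} := by
  simp only [Set.ofPred_forall]
  exact .biInter S.countable_toSet fun p _ => measurable_coin p.1 p.2 (measurableSet_singleton _)

lemma generateFrom_cylinders :
    MeasurableSpace.generateFrom cylinders = (inferInstance : MeasurableSpace (ℕ → ℤ → Bool)) := by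
  refine le_antisymm (MeasurableSpace.generateFrom_le ?_) ?_
  · rintro _ ⟨S, f, rfl⟩
    exact measurableSet_cylinder S f
  · have hcoin : ∀ j x, Measurable[MeasurableSpace.generateFrom cylinders]
        fun ω : ℕ → ℤ → Bool => ω j x := fun j x =>
      @measurable_to_countable' _ _ _ _ (_) _ fun b => MeasurableSpace.measurableSet_generateFrom
        ⟨{(j, x)}, fun _ => b, by ext; simp⟩
    have hid : Measurable[MeasurableSpace.generateFrom cylinders] (id : (ℕ → ℤ → Bool) → _) :=
      @measurable_pi_iff _ _ _ (_) _ _ |>.2 fun j => @measurable_pi_iff _ _ _ (_) _ _ |>.2 (hcoin j)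
    simpa using hid.comap_le

lemma isPiSystem_cylinders : IsPiSystem cylinders := by
  rintro _ ⟨S, f, rfl⟩ _ ⟨T, g, rfl⟩ ⟨ω₀, hS, hT⟩
  refine ⟨S ∪ T, fun p => ω₀ p.1 p.2, Set.ext fun ω => ⟨?_, fun h => ⟨?_, ?_⟩⟩⟩
  · rintro ⟨hωS, hωT⟩ p hp
    rcases Finset.mem_union.1 hp with hp | hp
    · exact (hωS p hp).trans (hS p hp).symm
    · exact (hωT p hp).trans (hT p hp).symm
  · exact fun p hp => (h p (Finset.mem_union_left T hp)).trans (hS p hp)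
  · exact fun p hp => (h p (Finset.mem_union_right S hp)).trans (hT p hp)

lemma IIDCoins.ext {μ ν : Measure (ℕ → ℤ → Bool)} (hμ : IIDCoins μ) (hν : IIDCoins ν) :
    μ = ν := by
  have huniv : ∀ ρ : Measure (ℕ → ℤ → Bool), IIDCoins ρ → ρ Set.univ = 1 := fun ρ hρ => by
    simpa using hρ ∅ default
  have : IsFiniteMeasure μ := ⟨by simp [huniv μ hμ]⟩
  refine ext_of_generate_finite cylinders generateFrom_cylinders.symm isPiSystem_cylinders ?_
    ((huniv μ hμ).trans (huniv ν hν).symm)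
  rintro _ ⟨S, f, rfl⟩
  rw [hμ, hν]

lemma IIDCoins.map_coinReflect {μ : Measure (ℕ → ℤ → Bool)} (hμ : IIDCoins μ) :
    IIDCoins (μ.map coinReflect) := by
  intro S f
  let ρ : ℕ × ℤ ≃ ℕ × ℤ := (Equiv.refl ℕ).prodCongr (Equiv.neg ℤ)
  rw [Measure.map_apply measurable_coinReflect (measurableSet_cylinder S f),
    ← Finset.card_map ρ.toEmbedding, ← hμ _ fun p => f (ρ.symm p)]
  congr 1
  ext ω
  simp only [Set.mem_preimage, Set.mem_ofPred_eq, Finset.forall_mem_map, Equiv.coe_toEmbedding,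
    Equiv.symm_apply_apply]
  rfl

lemma measure_unstable_evolve_reflect {μ : Measure (ℕ → ℤ → Bool)} (hμ : IIDCoins μ)
    (η : Config) (k : ℕ) :
    μ {ω | Unstable (evolve ω (reflect η) k) 0} = μ {ω | Unstable (evolve ω η k) 0} := by
  have hpre : coinReflect ⁻¹' {ω | Unstable (evolve ω (reflect η) k) 0} =
      {ω | Unstable (evolve ω η k) 0} := by
    ext ω
    simp only [Set.mem_preimage, Set.mem_ofPred_eq, evolve_coinReflect_reflect, unstable_reflect,
      neg_zero]
  rw [← hpre, ← Measure.map_apply measurable_coinReflect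
    (measurableSet_unstable (measurable_evolve_apply _ k) 0), hμ.map_coinReflect.ext hμ]

lemma not_unstable_of_eqOn_Iic {v η : Config} {m i : ℤ} (hagree : ∀ x ≤ m, v x = η x)
    (hne : v m ≠ v (m + 1)) (hi : i ≤ m) (hη : ¬Unstable η i) : ¬Unstable v i := by
  rw [unstable_iff_exists] at hη ⊢
  rintro ⟨y, hyi, hiy, h₁, h₂⟩
  have hy : y + 2 ≤ m := by
    by_contra
    obtain rfl | rfl : m = y + 1 ∨ m = y := by omega
    · exact hne (h₂.trans (congrArg v (by ring)))
    · exact hne h₁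
  rw [hagree y (by omega), hagree (y + 1) (by omega)] at h₁
  rw [hagree (y + 1) (by omega), hagree (y + 2) hy] at h₂
  exact hη ⟨y, hyi, hiy, h₁, h₂⟩

def alternateAfter (η : Config) (m : ℤ) : Config :=
  fun x => if x ≤ m then η x else xor (η m) (x - m).bodd

def flipAfter (η : Config) (m : ℤ) : Config :=
  fun x => if x ≤ m then η x else !η m

lemma alternateAfter_ne {η : Config} {m a b : ℤ} (ha : m ≤ a) (hb : b = a + 1) :
    alternateAfter η m a ≠ alternateAfter η m b := by
  have hform : ∀ x, m ≤ x → alternateAfter η m x = xor (η m) (x - m).bodd := by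
    intro x hx
    unfold alternateAfter
    split_ifs with h
    · simp [show x = m by omega]
    · rfl
  rw [hform a ha, hform b (by omega), hb, show a + 1 - m = a - m + 1 by ring, Int.bodd_add]
  simp

lemma not_unstable_alternateAfter {η : Config} {m i : ℤ} (hi : m < i) :
    ¬Unstable (alternateAfter η m) i := by
  rw [unstable_iff_exists]
  rintro ⟨y, hyi, hiy, h₁, h₂⟩
  rcases le_or_gt m y with hy | hy
  · exact alternateAfter_ne hy rfl h₁
  · exact alternateAfter_ne (by omega) (by ring) h₂

lemma natCast_toNat_le_natCast {i : ℤ} {m : ℕ} : ((i.toNat : ℕ∞) ≤ m) ↔ i ≤ m := by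
  rw [Nat.cast_le]
  omega

lemma SWindow.not_unstable {η : Config} {n m : ℕ∞} (h : SWindow η n m) {i : ℤ} (hi : 0 ≤ i)
    (him : (i.toNat : ℕ∞) ≤ m) : ¬Unstable η i :=
  h.1 i (by simp [Int.toNat_of_nonpos (neg_nonpos.2 hi)]) him

lemma swindow_alternateAfter {η : Config} {n : ℕ∞} {m : ℕ} (h : SWindow η n m) (hm : 1 ≤ m) :
    SWindow (alternateAfter η m) n ⊤ := by
  obtain ⟨hwin, hleft, -⟩ := h
  have hagree : ∀ x ≤ (m : ℤ), alternateAfter η m x = η x := fun x hx => if_pos hx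
  refine ⟨fun i hi _ => ?_, fun nn hnn => ?_, fun mm hmm => absurd hmm.symm (by simp)⟩
  · rcases le_or_gt i m with him | him
    · exact not_unstable_of_eqOn_Iic hagree (alternateAfter_ne le_rfl rfl) him
        (hwin i hi (natCast_toNat_le_natCast.2 him))
    · exact not_unstable_alternateAfter him
  · rw [unstable_congr (x := -(nn : ℤ) - 1) fun y _ _ => hagree y (by omega)]
    exact hleft nn hnn

lemma swindow_flipAfter {η : Config} {n : ℕ∞} {m : ℕ} (h : SWindow η n ⊤) (hm : 1 ≤ m) :
    SWindow (flipAfter η m) n m := by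
  obtain ⟨hwin, hleft, -⟩ := h
  have hagree : ∀ x ≤ (m : ℤ), flipAfter η m x = η x := fun x hx => if_pos hx
  have htail : ∀ x, (m : ℤ) < x → flipAfter η m x = !η m := fun x hx => if_neg (by omega)
  refine ⟨fun i hi him => ?_, fun nn hnn => ?_, fun mm hmm => ?_⟩
  · refine not_unstable_of_eqOn_Iic hagree ?_ (natCast_toNat_le_natCast.1 him) (hwin i hi le_top)
    rw [hagree m le_rfl, htail (m + 1) (by omega)]
    simp
  · rw [unstable_congr (x := -(nn : ℤ) - 1) fun y _ _ => hagree y (by omega)]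
    exact hleft nn hnn
  · obtain rfl : mm = m := by exact_mod_cast hmm.symm
    refine Or.inr (Or.inr ⟨?_, ?_⟩) <;> rw [htail _ (by omega), htail _ (by omega)]

lemma pS_le_pS_of_forall_exists {μ : Measure (ℕ → ℤ → Bool)} {k : ℕ} {n m n' m' : ℕ∞}
    (h : ∀ η, SWindow η n m → ∃ η', SWindow η' n' m' ∧
      μ {ω | Unstable (evolve ω η k) 0} ≤ μ {ω | Unstable (evolve ω η' k) 0}) :
    pS μ k n m ≤ pS μ k n' m' :=
  iSup₂_le fun η hη =>
    let ⟨η', hη', hle⟩ := h η hη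
    le_iSup₂_of_le (f := fun ξ (_ : SWindow ξ n' m') => μ {ω | Unstable (evolve ω ξ k) 0})
      η' hη' hle

lemma pS_comm {μ : Measure (ℕ → ℤ → Bool)} (hμ : IIDCoins μ) (k : ℕ) (n m : ℕ∞) :
    pS μ k n m = pS μ k m n := by
  have key : ∀ a b : ℕ∞, pS μ k a b ≤ pS μ k b a := fun a b =>
    pS_le_pS_of_forall_exists fun η hη =>
      ⟨reflect η, swindow_reflect hη, (measure_unstable_evolve_reflect hμ η k).ge⟩
  exact le_antisymm (key n m) (key m n)

lemma measure_unstable_evolve_eq_of_swindow (μ : Measure (ℕ → ℤ → Bool)) {k m : ℕ} (hk : 1 ≤ k)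
    (hm : 2 * k ≤ m) {ξ ξ' : Config} {n n' m' m'' : ℕ∞} (hξ : SWindow ξ n m')
    (hξ' : SWindow ξ' n' m'') (hm' : (m : ℕ∞) ≤ m') (hm'' : (m : ℕ∞) ≤ m'')
    (hagree : ∀ x ≤ (m : ℤ), ξ x = ξ' x) :
    μ {ω | Unstable (evolve ω ξ k) 0} = μ {ω | Unstable (evolve ω ξ' k) 0} := by
  obtain ⟨t, rfl⟩ : ∃ t, k = t + 1 := ⟨k - 1, by omega⟩
  have hstab : ∀ x, (m : ℤ) - 1 ≤ x → x ≤ m → ¬Unstable ξ x ∧ ¬Unstable ξ' x := fun x h₁ h₂ =>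
    ⟨hξ.not_unstable (by omega) ((natCast_toNat_le_natCast.2 h₂).trans hm'),
      hξ'.not_unstable (by omega) ((natCast_toNat_le_natCast.2 h₂).trans hm'')⟩
  exact congrArg μ <| Set.ext fun ω => unstable_congr fun y _ _ =>
    evolve_succ_eq_of_eqOn_Iic ω hagree hstab t y (by omega)

lemma pS_natCast_eq_pS_top (μ : Measure (ℕ → ℤ → Bool)) {k m : ℕ} (hk : 1 ≤ k) (hm : 2 * k ≤ m)
    (n : ℕ∞) : pS μ k n m = pS μ k n ⊤ := by
  refine le_antisymm (pS_le_pS_of_forall_exists fun η hη => ⟨alternateAfter η m, ?_, ?_⟩)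
    (pS_le_pS_of_forall_exists fun η hη => ⟨flipAfter η m, ?_, ?_⟩)
  · exact swindow_alternateAfter hη (by omega)
  · exact (measure_unstable_evolve_eq_of_swindow μ hk hm hη (swindow_alternateAfter hη (by omega))
      le_rfl le_top fun x hx => (if_pos hx).symm).le
  · exact swindow_flipAfter hη (by omega)
  · exact (measure_unstable_evolve_eq_of_swindow μ hk hm hη (swindow_flipAfter hη (by omega))
      le_top le_rfl fun x hx => (if_pos hx).symm).le

lemma pS_top_eq_zero (μ : Measure (ℕ → ℤ → Bool)) {k n : ℕ} (hn : 2 * k ≤ n) :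
    pS μ k n ⊤ = 0 := by
  refine le_antisymm (iSup₂_le fun η hη => ?_) zero_le
  have hstab : ∀ x : ℤ, -(n : ℤ) ≤ x → ¬Unstable η x := fun x hx =>
    hη.1 x (natCast_toNat_le_natCast.2 (by omega)) le_top
  have hempty : {ω : ℕ → ℤ → Bool | Unstable (evolve ω η k) 0} = ∅ :=
    Set.eq_empty_of_forall_notMem fun ω => not_unstable_evolve_of_forall_ge ω hstab k 0 (by omega)
  rw [hempty, measure_empty]

lemma sum_Icc_pS_eq {μ : Measure (ℕ → ℤ → Bool)} (hμ : IIDCoins μ) {k : ℕ} (hk : 1 ≤ k) :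
    ∑ i ∈ Finset.Icc 1 (4 * k), pS μ k ((i - 1 : ℕ) : ℕ∞) ((4 * k - i : ℕ) : ℕ∞) =
      2 * ∑ j ∈ Finset.range (2 * k), pS μ k (j : ℕ∞) ⊤ := by
  rw [← Finset.Ico_add_one_right_eq_Icc, Finset.sum_Ico_eq_sum_range,
    show 4 * k + 1 - 1 = 2 * k + 2 * k by omega, Finset.sum_range_add, two_mul (_ : ℝ≥0∞)]
  congr 1
  · refine Finset.sum_congr rfl fun j hj => ?_
    rw [Finset.mem_range] at hj
    rw [show 1 + j - 1 = j by omega, pS_natCast_eq_pS_top μ hk (by omega)]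
  · rw [← Finset.sum_range_reflect (fun j => pS μ k (j : ℕ∞) ⊤)]
    refine Finset.sum_congr rfl fun j hj => ?_
    rw [Finset.mem_range] at hj
    rw [pS_comm hμ, show 4 * k - (1 + (2 * k + j)) = 2 * k - 1 - j by omega,
      pS_natCast_eq_pS_top μ hk (by omega)]

theorem pS_unbounded_sum_general (μ : Measure (ℕ → ℤ → Bool))
    (hμ : IIDCoins μ) (k : ℕ) (hk : 1 ≤ k) :
    (∑' i : ℕ, pS μ k ((i : ℕ) : ℕ∞) ⊤ =
      (1 / 2 : ℝ≥0∞) * ∑ i ∈ Finset.Icc 1 (4 * k), pS μ k ((i - 1 : ℕ) : ℕ∞) ((4 * k - i : ℕ) : ℕ∞)) ∧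
    (∀ i : ℕ, 2 * k < i → pS μ k ((i - 1 : ℕ) : ℕ∞) ⊤ = 0) := by
  refine ⟨?_, fun i hi => pS_top_eq_zero μ (by omega)⟩
  rw [tsum_eq_sum (s := Finset.range (2 * k)) fun n hn => pS_top_eq_zero μ (by simpa using hn),
    sum_Icc_pS_eq hμ hk, ← mul_assoc, one_div, ENNReal.inv_mul_cancel two_ne_zero ofNat_ne_top,
    one_mul]

/-- `Σ_{i=1}^{∞} p_k^S(i-1, ∞) = (1/2) Σ_{i=1}^{4k} p_k^S(i-1, 4k-i)`; in
particular the series has finitely many nonzero terms, since `p_k^S(i-1, ∞) = 0` for `i > 2k`. -/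
theorem pS_unbounded_sum (μ : Measure (ℕ → ℤ → Bool)) [IsProbabilityMeasure μ]
    (hμ : IIDCoins μ) (k : ℕ) (hk : 1 ≤ k) :
    (∑' i : ℕ, pS μ k ((i : ℕ) : ℕ∞) ⊤ =
      (1 / 2 : ℝ≥0∞) * ∑ i ∈ Finset.Icc 1 (4 * k), pS μ k ((i - 1 : ℕ) : ℕ∞) ((4 * k - i : ℕ) : ℕ∞)) ∧
    (∀ i : ℕ, 2 * k < i → pS μ k ((i - 1 : ℕ) : ℕ∞) ⊤ = 0) :=
  pS_unbounded_sum_general μ hμ k hk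
end

section
/- For k = 1: p_1^I = 5/8 and p_1^{III} = 1/2. -/
open MeasureTheory ENNReal
open scoped Classical

-- ===== auxiliary lemmas =====

lemma unstable_congr_s13 {η η' : Config} {x : ℤ}
    (h : ∀ j, x - 2 ≤ j → j ≤ x + 2 → η j = η' j) :
    Unstable η x ↔ Unstable η' x := by
  unfold Unstable
  rw [h (x-2) (by omega) (by omega), h (x-1) (by omega) (by omega),
      h x (by omega) (by omega), h (x+1) (by omega) (by omega),
      h (x+2) (by omega) (by omega)]

lemma key_congr {η η' : Config} {c c' : ℤ → Bool}
    (hη : ∀ j, -4 ≤ j → j ≤ 4 → η j = η' j)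
    (hc : ∀ j, -2 ≤ j → j ≤ 2 → c j = c' j) :
    Unstable (update η c) 0 ↔ Unstable (update η' c') 0 := by
  apply unstable_congr_s13
  intro j h1 h2
  unfold update
  rw [if_congr (unstable_congr_s13 (fun i a b => hη i (by omega) (by omega)))
      (hc j (by omega) (by omega)) (hη j (by omega) (by omega))]

def cw (w : Fin 5 → Bool) : ℤ → Bool := fun x =>
  if x = -2 then w 0 else if x = -1 then w 1 else if x = 0 then w 2
  else if x = 1 then w 3 else w 4

def emb (b : Fin 9 → Bool) : Config := fun x =>
  if h : 0 ≤ x + 4 ∧ x + 4 < 9 then b ⟨(x+4).toNat, by omega⟩ else false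

def Gs (η : Config) : Finset (Fin 5 → Bool) :=
  Finset.univ.filter (fun w => Unstable (update η (cw w)) 0)

lemma cw_spec (w : Fin 5 → Bool) : ∀ i : Fin 5, cw w ((i : ℤ) - 2) = w i := by
  intro i; fin_cases i <;> norm_num [cw] <;> rfl

lemma cw_agree (ω0 : ℤ → Bool) :
    ∀ j, -2 ≤ j → j ≤ 2 → cw (fun i => ω0 ((i : ℤ) - 2)) j = ω0 j := by
  intro j h1 h2
  interval_cases j <;>
    norm_num [cw, show ((0:Fin 5):ℤ) = 0 from rfl, show ((1:Fin 5):ℤ) = 1 from rfl,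
      show ((2:Fin 5):ℤ) = 2 from rfl, show ((3:Fin 5):ℤ) = 3 from rfl,
      show ((4:Fin 5):ℤ) = 4 from rfl]

lemma emb_agree (η : Config) :
    ∀ j, -4 ≤ j → j ≤ 4 → η j = emb (fun i => η ((i : ℤ) - 4)) j := by
  intro j h1 h2
  unfold emb
  rw [dif_pos ⟨by omega, by omega⟩]
  show η j = η (((j + 4).toNat : ℤ) - 4)
  congr 1
  omega

lemma Gs_eq (η : Config) : Gs η = Gs (emb (fun i => η ((i : ℤ) - 4))) := by
  unfold Gs
  apply Finset.filter_congr
  intro w _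
  exact key_congr (emb_agree η) (fun j _ _ => rfl)

lemma measure_event (μ : Measure (ℕ → ℤ → Bool)) (hμ : IIDCoins μ) (η : Config) :
    μ {ω | Unstable (evolve ω η 1) 0} = (Gs η).card * (1 / 32 : ℝ≥0∞) := by
  have hev : ∀ ω : ℕ → ℤ → Bool, evolve ω η 1 = update η (ω 0) := fun ω => rfl
  set A : (Fin 5 → Bool) → Set (ℕ → ℤ → Bool) :=
    fun w => {ω | ∀ i : Fin 5, ω 0 ((i : ℤ) - 2) = w i} with hA
  have hAmeas : ∀ w, MeasurableSet (A w) := by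
    intro w
    have : A w = ⋂ i : Fin 5,
        (fun ω : ℕ → ℤ → Bool => ω 0 ((i : ℤ) - 2)) ⁻¹' {w i} := by
      ext ω; simp [hA]
    rw [this]
    exact MeasurableSet.iInter fun i =>
      ((measurable_pi_apply ((i : ℤ) - 2)).comp (measurable_pi_apply 0))
        (measurableSet_singleton _)
  have hAμ : ∀ w, μ (A w) = (1 / 32 : ℝ≥0∞) := by
    intro w
    set S : Finset (ℕ × ℤ) := Finset.univ.image (fun i : Fin 5 => ((0 : ℕ), (i : ℤ) - 2)) with hSdef
    have hinj : Function.Injective (fun i : Fin 5 => ((0 : ℕ), (i : ℤ) - 2)) := by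
      intro a b h
      simp only [Prod.mk.injEq, sub_left_inj] at h
      exact_mod_cast Fin.val_injective (by exact_mod_cast h.2)
    have hset : {ω : ℕ → ℤ → Bool | ∀ p ∈ S, ω p.1 p.2 = (fun p : ℕ × ℤ => cw w p.2) p} = A w := by
      ext ω
      simp only [hSdef, Finset.mem_image, Finset.mem_univ, true_and, Set.mem_setOf_eq, hA]
      constructor
      · intro h i
        have := h ((0 : ℕ), (i : ℤ) - 2) ⟨i, rfl⟩
        simpa [cw_spec w i] using this
      · intro h p hp
        obtain ⟨i, rfl⟩ := hp
        simpa [cw_spec w i] using h i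
    have hcard : S.card = 5 := by
      rw [hSdef, Finset.card_image_of_injective _ hinj, Finset.card_univ, Fintype.card_fin]
    have h2 := hμ S (fun p => cw w p.2)
    rw [hset, hcard] at h2
    rw [h2, one_div, ← ENNReal.inv_pow]
    norm_num
  have hE : {ω | Unstable (evolve ω η 1) 0} = ⋃ w ∈ Gs η, A w := by
    ext ω
    simp only [Set.mem_setOf_eq, Set.mem_iUnion, hev]
    constructor
    · intro h
      refine ⟨fun i : Fin 5 => ω 0 ((i : ℤ) - 2), ?_, fun i => rfl⟩
      rw [Gs, Finset.mem_filter]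
      exact ⟨Finset.mem_univ _,
        (key_congr (η' := η) (fun j _ _ => rfl) (fun j h1 h2 => (cw_agree (ω 0) j h1 h2))).mpr h⟩
    · rintro ⟨w, hw, hωw⟩
      rw [Gs, Finset.mem_filter] at hw
      have hcagree : ∀ j, -2 ≤ j → j ≤ 2 → cw w j = ω 0 j := by
        have hwdef : w = fun i : Fin 5 => ω 0 ((i : ℤ) - 2) := by
          funext i; exact (hωw i).symm
        rw [hwdef]; exact cw_agree (ω 0)
      exact (key_congr (η' := η) (fun j _ _ => rfl) hcagree).mp hw.2
  rw [hE, measure_biUnion_finset ?_ (fun w _ => hAmeas w)]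
  · rw [Finset.sum_congr rfl (fun w _ => hAμ w), Finset.sum_const, nsmul_eq_mul]
  · intro w hw w' hw' hne
    rw [Function.onFun, Set.disjoint_left]
    intro ω hωw hωw'
    exact hne (funext fun i => (hωw i).symm.trans (hωw' i))

set_option maxRecDepth 40000 in
lemma card_bound_I : ∀ b : Fin 9 → Bool, Unstable (emb b) 0 → (Gs (emb b)).card ≤ 20 := by
  decide

set_option maxRecDepth 40000 in
lemma card_bound_III : ∀ b : Fin 9 → Bool,
    Unstable (emb b) (-1) ∧ Unstable (emb b) 0 ∧ Unstable (emb b) 1 →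
    (Gs (emb b)).card ≤ 16 := by
  decide

def bI : Fin 9 → Bool := fun i => i.val == 5 || i.val == 6

set_option maxRecDepth 40000 in
lemma witness_I : Unstable (emb bI) 0 ∧ (Gs (emb bI)).card = 20 := by decide

def bIII : Fin 9 → Bool := fun _ => false

set_option maxRecDepth 40000 in
lemma witness_III : (Unstable (emb bIII) (-1) ∧ Unstable (emb bIII) 0 ∧ Unstable (emb bIII) 1)
    ∧ (Gs (emb bIII)).card = 16 := by decide

lemma arith20 : (20 : ℝ≥0∞) * (1 / 32) = 5 / 8 := by
  rw [mul_one_div]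
  rw [show (20 : ℝ≥0∞) = 5 * 4 by norm_num, show (32 : ℝ≥0∞) = 8 * 4 by norm_num]
  exact ENNReal.mul_div_mul_right 5 8 (by norm_num) (by norm_num)

lemma arith16 : (16 : ℝ≥0∞) * (1 / 32) = 1 / 2 := by
  rw [mul_one_div]
  rw [show (16 : ℝ≥0∞) = 1 * 16 by norm_num, show (32 : ℝ≥0∞) = 2 * 16 by norm_num]
  exact ENNReal.mul_div_mul_right 1 2 (by norm_num) (by norm_num)

/-- `p_1^I = 5/8` and `p_1^{III} = 1/2`. -/
theorem p1_values (μ : Measure (ℕ → ℤ → Bool)) [IsProbabilityMeasure μ]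
    (hμ : IIDCoins μ) :
    pI μ 1 = 5 / 8 ∧ pIII μ 1 = 1 / 2 := by
  constructor
  · apply le_antisymm
    · apply iSup_le; intro η; apply iSup_le; intro hη
      rw [measure_event μ hμ η, Gs_eq η]
      have hb : Unstable (emb (fun i => η ((i : ℤ) - 4))) 0 :=
        (unstable_congr_s13 (fun j h1 h2 => emb_agree η j (by omega) (by omega))).mp hη
      calc ((Gs (emb (fun i => η ((i : ℤ) - 4)))).card : ℝ≥0∞) * (1 / 32)
          ≤ (20 : ℕ) * (1 / 32) := by
            exact mul_le_mul_left (Nat.cast_le.mpr (card_bound_I _ hb)) _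
        _ = 5 / 8 := by rw [show ((20 : ℕ) : ℝ≥0∞) = 20 by norm_num]; exact arith20
    · have h := le_iSup₂ (f := fun (η : Config) (_ : Unstable η 0) =>
        μ {ω | Unstable (evolve ω η 1) 0}) (emb bI) witness_I.1
      rw [measure_event μ hμ (emb bI), witness_I.2] at h
      calc (5 / 8 : ℝ≥0∞) = (20 : ℕ) * (1 / 32) := by
            rw [show ((20 : ℕ) : ℝ≥0∞) = 20 by norm_num]; exact arith20.symm
        _ ≤ pI μ 1 := h
  · apply le_antisymm
    · apply iSup_le; intro η; apply iSup_le; intro hη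
      rw [measure_event μ hμ η, Gs_eq η]
      have hagree := fun j h1 h2 => emb_agree η j h1 h2
      have hb : Unstable (emb (fun i => η ((i : ℤ) - 4))) (-1) ∧
          Unstable (emb (fun i => η ((i : ℤ) - 4))) 0 ∧
          Unstable (emb (fun i => η ((i : ℤ) - 4))) 1 :=
        ⟨(unstable_congr_s13 (fun j h1 h2 => hagree j (by omega) (by omega))).mp hη.1,
         (unstable_congr_s13 (fun j h1 h2 => hagree j (by omega) (by omega))).mp hη.2.1,
         (unstable_congr_s13 (fun j h1 h2 => hagree j (by omega) (by omega))).mp hη.2.2⟩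
      calc ((Gs (emb (fun i => η ((i : ℤ) - 4)))).card : ℝ≥0∞) * (1 / 32)
          ≤ (16 : ℕ) * (1 / 32) := by
            exact mul_le_mul_left (Nat.cast_le.mpr (card_bound_III _ hb)) _
        _ = 1 / 2 := by rw [show ((16 : ℕ) : ℝ≥0∞) = 16 by norm_num]; exact arith16
    · have h := le_iSup₂ (f := fun (η : Config)
        (_ : Unstable η (-1) ∧ Unstable η 0 ∧ Unstable η 1) =>
        μ {ω | Unstable (evolve ω η 1) 0}) (emb bIII) witness_III.1
      rw [measure_event μ hμ (emb bIII), witness_III.2] at h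
      calc (1 / 2 : ℝ≥0∞) = (16 : ℕ) * (1 / 32) := by
            rw [show ((16 : ℕ) : ℝ≥0∞) = 16 by norm_num]; exact arith16.symm
        _ ≤ pIII μ 1 := h
end
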